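/- Let B = ⊕_{i∈ℤ} B_i be a ℤ-graded noetherian integral domain with saturation index e(B) = 1, and suppose B = B_0[x_1, …, x_n] where n ≥ 2 and each x_i is a nonzero homogeneous element of degree d_i ∈ ℤ∖{0}. For each i let e_i = gcd(d_1, …, d_{i-1}, d_{i+1}, …, d_n); let U = { i : 1 ≤ i ≤ n and x_i is a unit of B }, U^c = {1,…,n}∖U, and let E be the set of prime factors of ∏_{i∈U^c} e_i (E = ∅ if U^c = ∅). Then: (a) E ⊆ Π(B); (b) if U ≠ ∅ then every element of Π(B) is a prime factor of gcd{ d_i : i ∈ U }; (c) if HT(⋃_{i∈ℤ∖{0}} B_i) > 1 then every element of Π(B) is a prime factor of d_1 ⋯ d_n; (d) if HT({x_i, x_j}) > 1 for every choice of distinct i, j ∈ {1,…,n}, then Π(B) = E. -/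

import Mathlib

/-- A derivation `D : R → R` is *locally nilpotent* if for every `b` some iterate kills `b`. -/
def Derivation.IsLocallyNilpotentD {R : Type*} [CommRing R] (D : Derivation ℤ R R) : Prop :=
  ∀ b : R, ∃ n : ℕ, 0 < n ∧ (⇑D)^[n] b = 0

/-- A commutative ring is *rigid* if its only locally nilpotent derivation is `0`. -/
def IsRigidRing (R : Type*) [CommRing R] : Prop :=
  ∀ D : Derivation ℤ R R, Derivation.IsLocallyNilpotentD D → D = 0

/-- `C` is a polynomial ring in one variable over the subring `R`. -/
def IsPolynomialRingOver {C : Type*} [CommRing C] (R : Subring C) : Prop :=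
  ∃ e : C ≃+* Polynomial R, ∀ r : R, e (r : C) = Polynomial.C r

/-- `C` is a polynomial ring in one variable over some subring. -/
def IsPolynomialRingInOneVariable (C : Type*) [CommRing C] : Prop :=
  ∃ R : Subring C, IsPolynomialRingOver R

/-- gcd of a set of integers: the nonnegative generator of the ideal it spans. -/
noncomputable def Set.gcdInt (S : Set ℤ) : ℕ :=
  (Submodule.IsPrincipal.generator (Ideal.span S)).natAbs

section Graded

variable {B : Type*} [CommRing B] (𝒜 : ℤ → Submodule ℤ B)

/-- The `d`-th Veronese subring `B^{(d)} = ⊕_{i ∈ ℤ} B_{d i}` of a `ℤ`-graded ring. -/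
def VeroneseSubring (d : ℤ) : Subring B :=
  Subring.closure (⋃ i : ℤ, ((𝒜 (d * i) : Set B)))

/-- The saturation index `e(B) = gcd { i : B_i ≠ 0 }`. -/
noncomputable def satIndex : ℕ :=
  Set.gcdInt {i : ℤ | 𝒜 i ≠ ⊥}

/-- The saturation index `e(B/𝔭)` of the quotient of `B` by a homogeneous prime `𝔭`;
it equals `gcd { i : B_i ⊄ 𝔭 }`. -/
noncomputable def quotSatIndex (p : Ideal B) : ℕ :=
  Set.gcdInt {i : ℤ | ¬ (𝒜 i : Set B) ⊆ (p : Set B)}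

/-- `p` is a prime ideal of height `1` (in a domain). -/
def IsHeightOnePrime {R : Type*} [CommRing R] (p : Ideal R) : Prop :=
  p.IsPrime ∧ p ≠ ⊥ ∧ ∀ q : Ideal R, q.IsPrime → q < p → q = ⊥

/-- `HT(S) > 1`: no height-one prime ideal contains `S`. -/
def HTgtOne {R : Type*} [CommRing R] (S : Set R) : Prop :=
  ∀ p : Ideal R, IsHeightOnePrime p → ¬ S ⊆ (p : Set R)

variable [GradedAlgebra 𝒜]

/-- `B` is saturated in codimension 1 when `e(B/𝔭) = e(B)` for all homogeneous height-1 primes. -/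
def SaturatedInCodimOne : Prop :=
  ∀ p : Ideal B, Ideal.IsHomogeneous 𝒜 p → IsHeightOnePrime p →
    quotSatIndex 𝒜 p = satIndex 𝒜

/-- The set `Π(B)` of prime numbers dividing `e(B/𝔭)` for some homogeneous height-1 prime `𝔭`. -/
def PiSet : Set ℕ :=
  {q : ℕ | q.Prime ∧ ∃ p : Ideal B, Ideal.IsHomogeneous 𝒜 p ∧ IsHeightOnePrime p ∧
    q ∣ quotSatIndex 𝒜 p}

/-- The set `Π*(B)` of positive natural numbers divisible by no element of `Π(B)`. -/
def PiStar : Set ℕ :=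
  {d : ℕ | 1 ≤ d ∧ ∀ q ∈ PiSet 𝒜, ¬ q ∣ d}

/-- The set `𝒳_d` of nonzero homogeneous `x` with `gcd(deg x, d) = 1`. -/
def XSet (d : ℕ) : Set B :=
  {x : B | x ≠ 0 ∧ ∃ i : ℤ, x ∈ 𝒜 i ∧ Int.gcd i (d : ℤ) = 1}

/-- `f` is a cylindrical element: nonzero, homogeneous of nonzero degree and `B_(f)` is a
polynomial ring in one variable. -/
def IsCylindrical (f : B) : Prop :=
  f ≠ 0 ∧ ∃ i : ℤ, i ≠ 0 ∧ f ∈ 𝒜 i ∧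
    IsPolynomialRingInOneVariable (HomogeneousLocalization.Away 𝒜 f)

/-- The degree-zero part `B_0` as a subring of `B`. -/
def degZeroSubring : Subring B where
  carrier := (𝒜 0 : Set B)
  zero_mem' := zero_mem _
  one_mem' := SetLike.one_mem_graded 𝒜
  add_mem' := fun ha hb => add_mem ha hb
  neg_mem' := fun ha => neg_mem ha
  mul_mem' := fun ha hb => by simpa using SetLike.mul_mem_graded ha hb

end Graded

/-- `(A, B) ∈ EXT` relative to the structure map `ι : A →+* B`: every derivation of `A`
extends uniquely to a derivation of `B`. -/
def MemEXT {A B : Type*} [CommRing A] [CommRing B] (ι : A →+* B) : Prop :=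
  ∀ δ : Derivation ℤ A A, ∃! D : Derivation ℤ B B, ∀ a : A, D (ι a) = ι (δ a)

/-!
Write `x^a = ∏ xᵢ^aᵢ` and `w(a) = ∑ aᵢ dᵢ` for its degree. Since `B = B₀[x₁,…,xₙ]`, every
homogeneous element of degree `m` is a `B₀`-combination of monomials of weight `m`; hence for a
prime `𝔭`, some element of `B_m` lies outside `𝔭` iff some monomial `x^a` with `w(a) = m` does,
i.e. iff `m = w(a)` for some `a` supported on `{i : xᵢ ∉ 𝔭}`. So `e(B/𝔭)` divides `dᵢ` whenever
`xᵢ ∉ 𝔭` (in particular when `xᵢ` is a unit), it is divisible by `eᵢ` whenever `xᵢ ∈ 𝔭`, and it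
equals `e(B) = 1` when `𝔭` contains no `xᵢ`. Part (a) then needs a homogeneous height-one prime
containing a given non-unit `xᵢ`: Krull's principal ideal theorem gives a height-one prime, and
its homogeneous core is again one.
-/

namespace Set

lemma gcdInt_dvd {S : Set ℤ} {m : ℤ} (hm : m ∈ S) : (S.gcdInt : ℤ) ∣ m := by
  rw [gcdInt, Int.natAbs_dvd, ← Ideal.mem_span_singleton, Ideal.span_singleton_generator]
  exact Ideal.subset_span hm

lemma dvd_gcdInt {S : Set ℤ} {k : ℕ} (h : ∀ m ∈ S, (k : ℤ) ∣ m) : k ∣ S.gcdInt := by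
  have hle : Ideal.span S ≤ Ideal.span {(k : ℤ)} :=
    Ideal.span_le.mpr fun m hm => Ideal.mem_span_singleton.mpr (h m hm)
  have hgen := Ideal.mem_span_singleton.mp (hle (Submodule.IsPrincipal.generator_mem _))
  exact Int.ofNat_dvd.mp (Int.dvd_natAbs.mpr hgen)

end Set

section Height

variable {R : Type*} [CommRing R] [IsDomain R]

lemma isHeightOnePrime_of_height_le_one {p : Ideal R} [p.IsPrime] (hp : p ≠ ⊥)
    (h : p.height ≤ 1) : IsHeightOnePrime p := by
  refine ⟨‹_›, hp, fun q hq hqp => ?_⟩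
  have hlt : q.height < 1 := Ideal.height_le_iff (n := 1).mp h q hq hqp
  exact Ideal.height_eq_zero_iff_eq_bot.mp (Order.lt_one_iff.mp hlt)

lemma exists_isHeightOnePrime_mem [IsNoetherianRing R] {x : R} (hx0 : x ≠ 0) (hx : ¬IsUnit x) :
    ∃ p : Ideal R, IsHeightOnePrime p ∧ x ∈ p := by
  obtain ⟨p, hp⟩ := (Ideal.span {x}).nonempty_minimalPrimes (by simpa)
  have := hp.isPrime
  have hxp : x ∈ p := hp.1.2 (Ideal.mem_span_singleton_self x)
  refine ⟨p, isHeightOnePrime_of_height_le_one ?_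
    (Ideal.height_le_one_of_isPrincipal_of_mem_minimalPrimes _ p hp), hxp⟩
  rintro rfl
  exact hx0 ((Submodule.mem_bot R).mp hxp)

end Height

lemma Ideal.IsPrime.finsuppProd_pow_mem_iff {R ι : Type*} [CommRing R] {p : Ideal R}
    (hp : p.IsPrime) (x : ι → R) (a : ι →₀ ℕ) :
    a.prod (fun i k => x i ^ k) ∈ p ↔ ∃ i ∈ a.support, x i ∈ p := by
  rw [Finsupp.prod, hp.prod_mem_iff]
  exact exists_congr fun i => and_congr_right fun hi =>
    hp.pow_mem_iff_mem _ (Nat.pos_of_ne_zero (Finsupp.mem_support_iff.mp hi))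

section QuotSatIndex

variable {B : Type*} [CommRing B] {𝒜 : ℤ → Submodule ℤ B} {p : Ideal B} {y : B} {i : ℤ}

lemma quotSatIndex_dvd_of_mem_of_notMem (hy : y ∈ 𝒜 i) (hyp : y ∉ p) :
    (quotSatIndex 𝒜 p : ℤ) ∣ i :=
  Set.gcdInt_dvd fun h => hyp (h hy)

lemma quotSatIndex_dvd_of_isUnit [hp : p.IsPrime] (hy : y ∈ 𝒜 i) (hyu : IsUnit y) :
    (quotSatIndex 𝒜 p : ℤ) ∣ i :=
  quotSatIndex_dvd_of_mem_of_notMem hy fun h => hp.ne_top (p.eq_top_of_isUnit_mem h hyu)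

end QuotSatIndex

section Graded

variable {B ι : Type*} [CommRing B] (𝒜 : ℤ → Submodule ℤ B) [GradedAlgebra 𝒜]

lemma IsHeightOnePrime.homogeneousCore {p : Ideal B} (hp : IsHeightOnePrime p)
    (hne : (p.homogeneousCore 𝒜).toIdeal ≠ ⊥) : IsHeightOnePrime (p.homogeneousCore 𝒜).toIdeal :=
  ⟨hp.1.homogeneousCore, hne, fun q hq hlt =>
    hp.2.2 q hq (hlt.trans_le (Ideal.toIdeal_homogeneousCore_le 𝒜 p))⟩

lemma exists_homogeneous_isHeightOnePrime_mem [IsDomain B] [IsNoetherianRing B] {x : B} {i : ℤ}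
    (hx : x ∈ 𝒜 i) (hx0 : x ≠ 0) (hxu : ¬IsUnit x) :
    ∃ p : Ideal B, p.IsHomogeneous 𝒜 ∧ IsHeightOnePrime p ∧ x ∈ p := by
  obtain ⟨p, hp, hxp⟩ := exists_isHeightOnePrime_mem hx0 hxu
  have hx_core : x ∈ (p.homogeneousCore 𝒜).toIdeal :=
    Ideal.mem_homogeneousCore_of_homogeneous_of_mem ⟨i, hx⟩ hxp
  refine ⟨_, (p.homogeneousCore 𝒜).isHomogeneous, hp.homogeneousCore 𝒜 ?_, hx_core⟩
  intro h
  exact hx0 ((Submodule.mem_bot B).mp (h ▸ hx_core))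

variable {𝒜} {x : ι → B} {d : ι → ℤ}

lemma finsuppProd_pow_mem (hxd : ∀ i, x i ∈ 𝒜 (d i)) (a : ι →₀ ℕ) :
    a.prod (fun i k => x i ^ k) ∈ 𝒜 (Finsupp.weight d a) :=
  SetLike.prod_pow_mem_graded 𝒜 d x a fun i _ => hxd i

lemma exists_monomial_notMem (hxd : ∀ i, x i ∈ 𝒜 (d i))
    (hgen : Subring.closure ((𝒜 0 : Set B) ∪ Set.range x) = ⊤) {p : Ideal B} {m : ℤ} {u : B}
    (hu : u ∈ 𝒜 m) (hup : u ∉ p) :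
    ∃ a : ι →₀ ℕ, Finsupp.weight d a = m ∧ a.prod (fun i k => x i ^ k) ∉ p := by
  classical
  by_contra! hmon
  have hadj : Algebra.adjoin (degZeroSubring 𝒜) (Set.range x) = ⊤ := by
    rw [← Subalgebra.toSubring_inj, Algebra.adjoin_eq_ring_closure]
    exact (congrArg (Subring.closure <| · ∪ Set.range x) Subtype.range_coe).trans hgen
  obtain ⟨f, rfl⟩ : u ∈ (MvPolynomial.aeval (R := degZeroSubring 𝒜) x).range := by
    rw [← Algebra.adjoin_range_eq_range_aeval, hadj]; trivial
  apply hup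
  rw [← DirectSum.decompose_of_mem_same 𝒜 hu, ← GradedRing.proj_apply, f.as_sum, map_sum, map_sum]
  refine Ideal.sum_mem p fun a _ => ?_
  rw [AlgHom.toRingHom_eq_coe, RingHom.coe_coe, MvPolynomial.aeval_monomial]
  have hterm : algebraMap (degZeroSubring 𝒜) B (f.coeff a) * a.prod (fun i k => x i ^ k) ∈
      𝒜 (Finsupp.weight d a) := by
    have h := SetLike.mul_mem_graded (A := 𝒜) (i := 0) (f.coeff a).2 (finsuppProd_pow_mem hxd a)
    rwa [zero_add] at h
  by_cases ha : Finsupp.weight d a = m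
  · rw [GradedRing.proj_apply, ← ha, DirectSum.decompose_of_mem_same 𝒜 hterm]
    exact p.mul_mem_left _ (hmon a ha)
  · rw [GradedRing.proj_apply, DirectSum.decompose_of_mem_ne 𝒜 hterm ha]
    exact p.zero_mem

variable (hxd : ∀ i, x i ∈ 𝒜 (d i)) (hgen : Subring.closure ((𝒜 0 : Set B) ∪ Set.range x) = ⊤)
include hxd hgen

lemma dvd_quotSatIndex_of_mem {p : Ideal B} [hp : p.IsPrime] {i : ι} (hi : x i ∈ p) {q : ℕ}
    (hq : ∀ j, j ≠ i → (q : ℤ) ∣ d j) : q ∣ quotSatIndex 𝒜 p := by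
  refine Set.dvd_gcdInt fun m hm => ?_
  obtain ⟨u, hu, hup⟩ := Set.not_subset.mp hm
  obtain ⟨a, rfl, ha⟩ := exists_monomial_notMem hxd hgen hu hup
  rw [Finsupp.weight_apply]
  refine Finset.dvd_sum fun j hj => ?_
  have hji : j ≠ i := by
    rintro rfl
    exact ha ((hp.finsuppProd_pow_mem_iff x a).mpr ⟨j, hj, hi⟩)
  simpa only [nsmul_eq_mul] using (hq j hji).mul_left (a j : ℤ)

lemma quotSatIndex_eq_satIndex {p : Ideal B} [hp : p.IsPrime] (hxp : ∀ i, x i ∉ p) :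
    quotSatIndex 𝒜 p = satIndex 𝒜 := by
  refine congrArg Set.gcdInt (Set.ext fun m => ⟨fun hm hbot => hm ?_, fun hm hsub => ?_⟩)
  · simp [hbot]
  · obtain ⟨u, hu, hu0⟩ := (Submodule.ne_bot_iff _).mp hm
    obtain ⟨a, rfl, -⟩ := exists_monomial_notMem hxd hgen (p := ⊥) hu (by simpa using hu0)
    obtain ⟨i, -, hi⟩ := (hp.finsuppProd_pow_mem_iff x a).mp (hsub (finsuppProd_pow_mem hxd a))
    exact hxp i hi

lemma exists_notMem_of_homogeneous_notMem {p : Ideal B} [hp : p.IsPrime] {m : ℤ} {u : B}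
    (hm : m ≠ 0) (hu : u ∈ 𝒜 m) (hup : u ∉ p) : ∃ j, x j ∉ p := by
  obtain ⟨a, rfl, ha⟩ := exists_monomial_notMem hxd hgen hu hup
  obtain ⟨j, hj⟩ : a.support.Nonempty := by
    rw [Finset.nonempty_iff_ne_empty, Ne, Finsupp.support_eq_empty]
    rintro rfl
    exact hm (map_zero _)
  exact ⟨j, fun hjp => ha ((hp.finsuppProd_pow_mem_iff x a).mpr ⟨j, hj, hjp⟩)⟩

variable [Fintype ι] [DecidableEq ι]

lemma mem_piSet_of_dvd_gcd_erase [IsDomain B] [IsNoetherianRing B] {i : ι} (hx0 : x i ≠ 0)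
    (hxu : ¬IsUnit (x i)) {q : ℕ} (hq : q.Prime) (hdvd : (q : ℤ) ∣ (Finset.univ.erase i).gcd d) :
    q ∈ PiSet 𝒜 := by
  obtain ⟨p, hhom, hp, hxp⟩ := exists_homogeneous_isHeightOnePrime_mem 𝒜 (hxd i) hx0 hxu
  have := hp.1
  refine ⟨hq, p, hhom, hp, dvd_quotSatIndex_of_mem hxd hgen hxp fun j hj => ?_⟩
  exact hdvd.trans (Finset.gcd_dvd (Finset.mem_erase.mpr ⟨hj, Finset.mem_univ j⟩))

omit [DecidableEq ι] in
lemma dvd_prod_of_mem_piSet (hht : HTgtOne (⋃ i ∈ {i : ℤ | i ≠ 0}, (𝒜 i : Set B))) {q : ℕ}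
    (hq : q ∈ PiSet 𝒜) : (q : ℤ) ∣ ∏ i, d i := by
  obtain ⟨-, p, -, hp, hdvd⟩ := hq
  have := hp.1
  obtain ⟨u, hu, hup⟩ := Set.not_subset.mp (hht p hp)
  obtain ⟨m, hm0, hum⟩ := Set.mem_iUnion₂.mp hu
  obtain ⟨j, hj⟩ := exists_notMem_of_homogeneous_notMem hxd hgen hm0 hum hup
  calc (q : ℤ) ∣ quotSatIndex 𝒜 p := Int.natCast_dvd_natCast.mpr hdvd
    _ ∣ d j := quotSatIndex_dvd_of_mem_of_notMem (hxd j) hj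
    _ ∣ ∏ i, d i := Finset.dvd_prod_of_mem d (Finset.mem_univ j)

lemma exists_dvd_gcd_erase_of_mem_piSet (hsat : satIndex 𝒜 = 1)
    (hht : ∀ i j, i ≠ j → HTgtOne {x i, x j}) {q : ℕ} (hq : q ∈ PiSet 𝒜) :
    ∃ i, ¬IsUnit (x i) ∧ (q : ℤ) ∣ (Finset.univ.erase i).gcd d := by
  obtain ⟨hq, p, -, hp, hdvd⟩ := hq
  have := hp.1
  obtain ⟨i, hi⟩ : ∃ i, x i ∈ p := by
    by_contra! h
    rw [quotSatIndex_eq_satIndex hxd hgen h, hsat] at hdvd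
    exact hq.ne_one (Nat.dvd_one.mp hdvd)
  refine ⟨i, fun hu => hp.1.ne_top (p.eq_top_of_isUnit_mem hi hu), Finset.dvd_gcd fun j hj => ?_⟩
  have hjp : x j ∉ p := fun hjp => hht j i (Finset.ne_of_mem_erase hj) p hp
    (Set.insert_subset_iff.mpr ⟨hjp, Set.singleton_subset_iff.mpr hi⟩)
  exact (Int.natCast_dvd_natCast.mpr hdvd).trans (quotSatIndex_dvd_of_mem_of_notMem (hxd j) hjp)

end Graded

lemma dvd_of_mem_piSet_of_isUnit {B : Type*} [CommRing B] {𝒜 : ℤ → Submodule ℤ B}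
    [GradedAlgebra 𝒜] {q : ℕ} (hq : q ∈ PiSet 𝒜) {y : B} {i : ℤ} (hy : y ∈ 𝒜 i)
    (hyu : IsUnit y) : (q : ℤ) ∣ i := by
  obtain ⟨-, p, -, hp, hdvd⟩ := hq
  have := hp.1
  exact (Int.natCast_dvd_natCast.mpr hdvd).trans (quotSatIndex_dvd_of_isUnit hy hyu)

theorem statement9_general {B : Type*} [CommRing B] [IsDomain B] [IsNoetherianRing B]
    (𝒜 : ℤ → Submodule ℤ B) [GradedAlgebra 𝒜]
    (hsat : satIndex 𝒜 = 1)
    (n : ℕ) (x : Fin n → B) (d : Fin n → ℤ)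
    (hx0 : ∀ i, x i ≠ 0) (hxd : ∀ i, x i ∈ 𝒜 (d i))
    (hgen : Subring.closure ((𝒜 0 : Set B) ∪ Set.range x) = ⊤) :
    (∀ q : ℕ, q.Prime →
      (∃ i, ¬ IsUnit (x i) ∧ (q : ℤ) ∣ Finset.gcd (Finset.univ.erase i) d) →
      q ∈ PiSet 𝒜) ∧
    ((∃ i, IsUnit (x i)) → ∀ q ∈ PiSet 𝒜, ∀ i, IsUnit (x i) → (q : ℤ) ∣ d i) ∧
    (HTgtOne (⋃ i ∈ {i : ℤ | i ≠ 0}, (𝒜 i : Set B)) →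
      ∀ q ∈ PiSet 𝒜, (q : ℤ) ∣ ∏ i, d i) ∧
    ((∀ i j, i ≠ j → HTgtOne {x i, x j}) →
      PiSet 𝒜 = {q : ℕ | q.Prime ∧
        ∃ i, ¬ IsUnit (x i) ∧ (q : ℤ) ∣ Finset.gcd (Finset.univ.erase i) d}) := by
  have part_a : ∀ q : ℕ, q.Prime →
      (∃ i, ¬ IsUnit (x i) ∧ (q : ℤ) ∣ Finset.gcd (Finset.univ.erase i) d) → q ∈ PiSet 𝒜 :=
    fun q hq ⟨i, hxu, hdvd⟩ => mem_piSet_of_dvd_gcd_erase hxd hgen (hx0 i) hxu hq hdvd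
  refine ⟨part_a, fun _ q hq i hxu => dvd_of_mem_piSet_of_isUnit hq (hxd i) hxu,
    fun hht q hq => dvd_prod_of_mem_piSet hxd hgen hht hq, fun hht => Set.ext fun q => ?_⟩
  exact ⟨fun hq => ⟨hq.1, exists_dvd_gcd_erase_of_mem_piSet hxd hgen hsat hht hq⟩,
    fun ⟨hq, hE⟩ => part_a q hq hE⟩

/-- Let `B` be a `ℤ`-graded noetherian domain with `e(B) = 1`,
`B = B₀[x₁,…,xₙ]` with `n ≥ 2` and `xᵢ` nonzero homogeneous of degree `dᵢ ≠ 0`. With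
`eᵢ = gcd(d₁,…,d̂ᵢ,…,dₙ)`, `U = {i : xᵢ is a unit}` and `E` the set of prime factors of
`∏_{i∉U} eᵢ`: (a) `E ⊆ Π(B)`; (b) if `U ≠ ∅` then every element of `Π(B)` divides `dᵢ` for
each `i ∈ U`; (c) if `HT(⋃_{i≠0} B_i) > 1` then every element of `Π(B)` divides `d₁⋯dₙ`;
(d) if `HT({xᵢ,xⱼ}) > 1` for all `i ≠ j`, then `Π(B) = E`. -/
theorem statement9 {B : Type*} [CommRing B] [IsDomain B] [IsNoetherianRing B]
    (𝒜 : ℤ → Submodule ℤ B) [GradedAlgebra 𝒜]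
    (hsat : satIndex 𝒜 = 1)
    (n : ℕ) (hn : 2 ≤ n) (x : Fin n → B) (d : Fin n → ℤ)
    (hx0 : ∀ i, x i ≠ 0) (hd0 : ∀ i, d i ≠ 0) (hxd : ∀ i, x i ∈ 𝒜 (d i))
    (hgen : Subring.closure ((𝒜 0 : Set B) ∪ Set.range x) = ⊤) :
    (∀ q : ℕ, q.Prime →
      (∃ i, ¬ IsUnit (x i) ∧ (q : ℤ) ∣ Finset.gcd (Finset.univ.erase i) d) →
      q ∈ PiSet 𝒜) ∧
    ((∃ i, IsUnit (x i)) → ∀ q ∈ PiSet 𝒜, ∀ i, IsUnit (x i) → (q : ℤ) ∣ d i) ∧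
    (HTgtOne (⋃ i ∈ {i : ℤ | i ≠ 0}, (𝒜 i : Set B)) →
      ∀ q ∈ PiSet 𝒜, (q : ℤ) ∣ ∏ i, d i) ∧
    ((∀ i j, i ≠ j → HTgtOne {x i, x j}) →
      PiSet 𝒜 = {q : ℕ | q.Prime ∧
        ∃ i, ¬ IsUnit (x i) ∧ (q : ℤ) ∣ Finset.gcd (Finset.univ.erase i) d}) :=
  statement9_general 𝒜 hsat n x d hx0 hxd hgen
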